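/- Define K(s) = 4s − (1 + s²) log|(s+1)/(s−1)| for s > 0, s ≠ 1. Then: (i) K(s) = s² K(1/s) for every s > 0 with s ≠ 1; and (ii) there exist constants a ∈ (0, 1) and C > 0 such that for every s > 0 with s ≠ 1: K(s) ≥ s − C · log|(s+1)/(s−1)| · 1_{{a ≤ s ≤ 1/a}}. -/

import Mathlib

/-!
Both parts rest on the inversion `s ↦ 1/s`, which preserves `log |(s+1)/(s-1)|`; this gives (i)
directly. For `s ≤ 1/4`, `log ((1+s)/(1-s)) ≤ 2s/(1-s)` yields `(1+s²) log ≤ 3s`, hence `K(s) ≥ s`,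
and (i) transfers this to `s ≥ 4`. On `[1/4, 4]` the crude bound `1 + s² ≤ 17` suffices, so
`a = 1/4` and `C = 17` work.
-/

open Real Set

/-- The interaction kernel `K(s) = 4s - (1 + s²) log|(s+1)/(s-1)|` arising in the
estimate of `u_x(π/2)` in Section 3.2. -/
noncomputable def Kkernel (s : ℝ) : ℝ :=
  4 * s - (1 + s ^ 2) * Real.log |(s + 1) / (s - 1)|

lemma log_abs_add_one_div_sub_one_nonneg {s : ℝ} (hs : 0 ≤ s) :
    0 ≤ log |(s + 1) / (s - 1)| := by
  rcases eq_or_ne s 1 with rfl | hs1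
  · simp
  refine log_nonneg ?_
  rw [abs_div, one_le_div (abs_pos.mpr (sub_ne_zero.mpr hs1)),
    abs_of_nonneg (by linarith : 0 ≤ s + 1)]
  exact abs_le.mpr ⟨by linarith, by linarith⟩

lemma log_abs_add_one_div_sub_one_one_div (s : ℝ) :
    log |(1 / s + 1) / (1 / s - 1)| = log |(s + 1) / (s - 1)| := by
  rcases eq_or_ne s 0 with rfl | hs
  · simp
  rw [div_add_one hs, div_sub_one hs, div_div_div_cancel_right₀ hs, abs_div, abs_div,
    abs_sub_comm, add_comm]

theorem Kkernel_eq_sq_mul_Kkernel_one_div {s : ℝ} (hs : s ≠ 0) :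
    Kkernel s = s ^ 2 * Kkernel (1 / s) := by
  rw [Kkernel, Kkernel, log_abs_add_one_div_sub_one_one_div]
  field_simp
  ring

lemma log_one_add_div_one_sub_le {s : ℝ} (h₁ : -1 < s) (h₂ : s < 1) :
    log ((1 + s) / (1 - s)) ≤ 2 * s / (1 - s) := by
  have : 1 - s ≠ 0 := by linarith
  calc log ((1 + s) / (1 - s)) ≤ (1 + s) / (1 - s) - 1 :=
        log_le_sub_one_of_pos (div_pos (by linarith) (by linarith))
    _ = 2 * s / (1 - s) := by field_simp; ring

theorem le_Kkernel_of_le_quarter {s : ℝ} (hs : 0 < s) (h : s ≤ 1 / 4) : s ≤ Kkernel s := by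
  have habs : |(s + 1) / (s - 1)| = (1 + s) / (1 - s) := by
    rw [abs_div, abs_of_pos (by linarith : 0 < s + 1), abs_of_neg (by linarith : s - 1 < 0),
      neg_sub, add_comm]
  have hlog := log_one_add_div_one_sub_le (s := s) (by linarith) (by linarith)
  have : (1 + s ^ 2) * (2 * s / (1 - s)) ≤ 3 * s := by
    rw [mul_div_assoc', div_le_iff₀ (by linarith)]; nlinarith
  rw [Kkernel, habs]
  nlinarith [mul_le_mul_of_nonneg_left hlog (by positivity : (0:ℝ) ≤ 1 + s ^ 2)]

theorem le_Kkernel_of_four_le {s : ℝ} (h : 4 ≤ s) : s ≤ Kkernel s := by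
  have hs : 0 < s := by linarith
  have := le_Kkernel_of_le_quarter (one_div_pos.mpr hs) (by rw [div_le_div_iff₀] <;> linarith)
  rw [Kkernel_eq_sq_mul_Kkernel_one_div hs.ne']
  calc s = s ^ 2 * (1 / s) := by field_simp
    _ ≤ _ := by gcongr

theorem sub_mul_log_le_Kkernel {s : ℝ} (hs : 0 ≤ s) (h : s ≤ 4) :
    s - 17 * log |(s + 1) / (s - 1)| ≤ Kkernel s := by
  have := log_abs_add_one_div_sub_one_nonneg hs
  rw [Kkernel]
  nlinarith [mul_nonneg (by nlinarith : (0:ℝ) ≤ 16 - s ^ 2) this]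

theorem Kkernel_symm_and_lower_bound :
    (∀ s : ℝ, 0 < s → s ≠ 1 → Kkernel s = s ^ 2 * Kkernel (1 / s)) ∧
    (∃ a : ℝ, a ∈ Ioo (0 : ℝ) 1 ∧ ∃ C : ℝ, 0 < C ∧
      ∀ s : ℝ, 0 < s → s ≠ 1 →
        Kkernel s
          ≥ s - C * Real.log |(s + 1) / (s - 1)|
              * (if a ≤ s ∧ s ≤ 1 / a then 1 else 0)) := by
  refine ⟨fun s hs _ => Kkernel_eq_sq_mul_Kkernel_one_div hs.ne', 1 / 4,
    ⟨by norm_num, by norm_num⟩, 17, by norm_num, fun s hs _ => ?_⟩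
  split_ifs with h
  · rw [mul_one]
    exact sub_mul_log_le_Kkernel hs.le (by linarith [h.2])
  · rw [mul_zero, sub_zero]
    rcases le_or_gt s (1 / 4) with h' | h'
    · exact le_Kkernel_of_le_quarter hs h'
    · exact le_Kkernel_of_four_le (by norm_num at h; linarith [h h'.le])
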